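/- For every z ∈ (−1,1), one has ∫_{−1}^{1} w · log( (√(1−z²)·√(1−w²) + 1 − z·w) / |z−w| ) dw = (π/2)·z·√(1−z²). -/

import Mathlib

open Real Set MeasureTheory intervalIntegral Interval

/-! Away from `w = z` the integrand splits as `w log N(z, w) - w log |z - w|` with
`N(z, w) = √(1 - z²) √(1 - w²) + 1 - z w`, and both pieces have elementary primitives.
Their boundary terms `(1 - z²)/2 · log ((1 - z)/(1 + z)) - z` coincide, so only the
`arcsin` term of the first primitive survives, giving `(π/2) z √(1 - z²)`. -/

lemma intervalIntegrable_mul_log_abs_sub (z a b : ℝ) :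
    IntervalIntegrable (fun w => w * log |z - w|) volume a b := by
  have hlog : IntervalIntegrable (fun w => log (w - z)) volume a b := by
    simpa using (intervalIntegrable_log' (a := a - z) (b := b - z)).comp_sub_right z
  exact (hlog.continuousOn_mul continuousOn_id).congr fun w _ => by
    simp only [id, abs_sub_comm z w, log_abs]

lemma integral_mul_log_abs_sub (z a b : ℝ) :
    ∫ w in a..b, w * log |z - w| =
      ((b + z) / 2 * ((b - z) * log (b - z)) - (b + z) ^ 2 / 4) -
        ((a + z) / 2 * ((a - z) * log (a - z)) - (a + z) ^ 2 / 4) := by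
  refine integral_eq_of_hasDerivAt_off_countable
    (fun w => (w + z) / 2 * ((w - z) * log (w - z)) - (w + z) ^ 2 / 4) _ (countable_singleton z)
    (by fun_prop) (fun w hw => ?_) (intervalIntegrable_mul_log_abs_sub z a b)
  have hwz : w - z ≠ 0 := sub_ne_zero.mpr hw.2
  have := ((((hasDerivAt_id w).add_const z).div_const 2).mul
    ((hasDerivAt_mul_log hwz).comp w ((hasDerivAt_id w).sub_const z))).sub
    (((hasDerivAt_id w).add_const z).pow 2 |>.div_const 4)
  refine this.congr_deriv ?_
  rw [abs_sub_comm, log_abs]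
  simp only [id, Function.comp_apply]
  ring

lemma integral_neg_one_one_mul_log_abs_sub (z : ℝ) :
    ∫ w in (-1 : ℝ)..1, w * log |z - w| = (1 - z ^ 2) / 2 * (log (1 - z) - log (1 + z)) - z := by
  rw [integral_mul_log_abs_sub, show (-1 : ℝ) - z = -(1 + z) by ring, log_neg_eq_log]
  ring

noncomputable def kernelNumerator (z w : ℝ) : ℝ :=
  √(1 - z ^ 2) * √(1 - w ^ 2) + 1 - z * w

lemma kernelNumerator_pos {z w : ℝ} (hz : z ∈ Ioo (-1) 1) (hw : w ∈ Icc (-1) 1) :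
    0 < kernelNumerator z w := by
  obtain ⟨hz₁, hz₂⟩ := hz
  obtain ⟨hw₁, hw₂⟩ := hw
  have hzw : 0 < 1 - z * w := by rcases le_total 0 z with h | h <;> nlinarith
  unfold kernelNumerator
  nlinarith [mul_nonneg (sqrt_nonneg (1 - z ^ 2)) (sqrt_nonneg (1 - w ^ 2))]

lemma continuousOn_log_kernelNumerator {z : ℝ} (hz : z ∈ Ioo (-1) 1) :
    ContinuousOn (fun w => log (kernelNumerator z w)) (Icc (-1) 1) :=
  ContinuousOn.log (by unfold kernelNumerator; fun_prop) fun w hw =>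
    (kernelNumerator_pos hz hw).ne'

lemma intervalIntegrable_mul_log_kernelNumerator {z : ℝ} (hz : z ∈ Ioo (-1) 1) :
    IntervalIntegrable (fun w => w * log (kernelNumerator z w)) volume (-1) 1 := by
  refine ContinuousOn.intervalIntegrable ?_
  rw [uIcc_of_le (by norm_num)]
  exact continuousOn_id.mul (continuousOn_log_kernelNumerator hz)

/-- With `z = cos φ`, `w = cos θ`, `s = sin φ`, `r = sin θ` this is
`(cos θ - cos φ) sin (θ + φ) = (sin φ - sin θ) (1 - cos (θ + φ))`. -/
lemma sub_mul_add_mul_eq_sub_mul_of_sq_eq {z w s r : ℝ} (hs : s ^ 2 = 1 - z ^ 2) (hr : r ^ 2 = 1 - w ^ 2) :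
    (w - z) * (s * w + z * r) = (s - r) * (s * r + 1 - z * w) := by
  linear_combination s * hr - r * hs

lemma hasDerivAt_sqrt_one_sub_sq {w : ℝ} (hw : w ∈ Ioo (-1) 1) :
    HasDerivAt (fun x => √(1 - x ^ 2)) (-w / √(1 - w ^ 2)) w := by
  have h : 1 - w ^ 2 ≠ 0 := by nlinarith [hw.1, hw.2]
  refine ((hasDerivAt_pow 2 w).const_sub 1).sqrt h |>.congr_deriv ?_
  ring

lemma hasDerivAt_kernelNumerator (z : ℝ) {w : ℝ} (hw : w ∈ Ioo (-1) 1) :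
    HasDerivAt (kernelNumerator z)
      (-(√(1 - z ^ 2) * w + z * √(1 - w ^ 2)) / √(1 - w ^ 2)) w := by
  have hr : √(1 - w ^ 2) ≠ 0 := (sqrt_pos.mpr (by nlinarith [hw.1, hw.2])).ne'
  refine (((hasDerivAt_sqrt_one_sub_sq hw).const_mul _).add_const 1).sub
    ((hasDerivAt_id w).const_mul z) |>.congr_deriv ?_
  field_simp
  ring

lemma hasDerivAt_primitive_mul_log_kernelNumerator {z w : ℝ} (hz : z ∈ Ioo (-1) 1)
    (hw : w ∈ Ioo (-1) 1) :
    HasDerivAt (fun x => (x ^ 2 - z ^ 2) / 2 * log (kernelNumerator z x) +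
        √(1 - z ^ 2) * z / 2 * arcsin x - √(1 - z ^ 2) / 2 * √(1 - x ^ 2) - (x + z) ^ 2 / 4)
      (w * log (kernelNumerator z w)) w := by
  have hN := kernelNumerator_pos hz (Ioo_subset_Icc_self hw)
  have hr : √(1 - w ^ 2) ≠ 0 := (sqrt_pos.mpr (by nlinarith [hw.1, hw.2])).ne'
  have key := sub_mul_add_mul_eq_sub_mul_of_sq_eq (sq_sqrt (by nlinarith [hz.1, hz.2] : 0 ≤ 1 - z ^ 2))
    (sq_sqrt (by nlinarith [hw.1, hw.2] : 0 ≤ 1 - w ^ 2))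
  have := (((((hasDerivAt_pow 2 w).sub_const (z ^ 2)).div_const 2).mul
    ((hasDerivAt_kernelNumerator z hw).log hN.ne')).add
    ((hasDerivAt_arcsin hw.1.ne' hw.2.ne).const_mul (√(1 - z ^ 2) * z / 2))).sub
    ((hasDerivAt_sqrt_one_sub_sq hw).const_mul (√(1 - z ^ 2) / 2)) |>.sub
    (((hasDerivAt_id w).add_const z).pow 2 |>.div_const 4)
  refine this.congr_deriv ?_
  unfold kernelNumerator at *
  set s := √(1 - z ^ 2)
  set r := √(1 - w ^ 2)
  set N := s * r + 1 - z * w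
  have hterm : (w ^ 2 - z ^ 2) / 2 * (-(s * w + z * r) / r / N) =
      -((w + z) * (s - r)) / (2 * r) := by
    field_simp
    linear_combination -(w + z) * key
  simp only [id]
  rw [hterm]
  field_simp
  ring

lemma integral_neg_one_one_mul_log_kernelNumerator {z : ℝ} (hz : z ∈ Ioo (-1) 1) :
    ∫ w in (-1 : ℝ)..1, w * log (kernelNumerator z w) =
      (1 - z ^ 2) / 2 * (log (1 - z) - log (1 + z)) + π / 2 * z * √(1 - z ^ 2) - z := by
  rw [integral_eq_sub_of_hasDerivAt_of_le (by norm_num) ?_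
    (fun w hw => hasDerivAt_primitive_mul_log_kernelNumerator hz hw)
    (intervalIntegrable_mul_log_kernelNumerator hz)]
  · simp only [kernelNumerator, arcsin_one, arcsin_neg, one_pow, neg_one_sq, sub_self, sqrt_zero,
      mul_zero, zero_add, mul_one, mul_neg, sub_neg_eq_add]
    ring
  · have : ContinuousOn (fun x : ℝ => √(1 - z ^ 2) * z / 2 * arcsin x) (Icc (-1) 1) := by
      fun_prop
    exact (((continuousOn_id.pow 2).sub continuousOn_const).div_const 2 |>.mul
      (continuousOn_log_kernelNumerator hz)).add this |>.sub (by fun_prop) |>.sub (by fun_prop)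

/-- For every `z ∈ (−1,1)`,
`∫_{−1}^{1} w·log((√(1−z²)√(1−w²) + 1 − zw)/|z−w|) dw = (π/2)·z·√(1−z²)`. -/
theorem defNLS_second_NDR_vacuum_condensate (z : ℝ) (hz : z ∈ Set.Ioo (-1 : ℝ) 1) :
    (∫ w in (-1 : ℝ)..1,
        w * Real.log ((Real.sqrt (1 - z ^ 2) * Real.sqrt (1 - w ^ 2) + 1 - z * w) / |z - w|))
      = (π / 2) * z * Real.sqrt (1 - z ^ 2) := by
  change ∫ w in (-1 : ℝ)..1, w * log (kernelNumerator z w / |z - w|) = _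
  have hsplit : ∀ᵐ w, w ∈ Ι (-1 : ℝ) 1 →
      w * log (kernelNumerator z w / |z - w|) = w * log (kernelNumerator z w) - w * log |z - w| := by
    filter_upwards [Measure.ae_ne volume z] with w hwz hw
    rw [uIoc_of_le (by norm_num)] at hw
    rw [log_div (kernelNumerator_pos hz (Ioc_subset_Icc_self hw)).ne'
      (abs_pos.2 (sub_ne_zero.2 hwz.symm)).ne', mul_sub]
  rw [integral_congr_ae hsplit, integral_sub (intervalIntegrable_mul_log_kernelNumerator hz)
    (intervalIntegrable_mul_log_abs_sub z (-1) 1), integral_neg_one_one_mul_log_kernelNumerator hz,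
    integral_neg_one_one_mul_log_abs_sub]
  ring
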